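/- arXiv:0912.2432 — 2 statements merged into one kernel-verified Lean document; each statement's English description precedes it below -/
import Mathlib

section
/- Let u : A ⥤ B be a functor between small categories which is a precofibration and such that for every object b of B the fiber A_b of u over b is aspheric. Then u is an aspheric functor. -/
open CategoryTheory Limits

namespace Paper

/-- A right asphericity structure: a class of small categories satisfying (As1): every
small category having a terminal object belongs to the class, and (As2): if `u : A ⥤ B`
is a functor with `B` in the class and all comma categories `A/b` in the class, then `A`
is in the class. -/
def IsRightAsphericityStructure (𝒜 : Set Cat.{0,0}) : Prop :=
  (∀ C : Cat.{0,0}, HasTerminal C → C ∈ 𝒜) ∧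
  (∀ (A B : Cat.{0,0}) (u : A ⥤ B), B ∈ 𝒜 →
    (∀ b : B, Cat.of (CostructuredArrow u b) ∈ 𝒜) → A ∈ 𝒜)

/-- A functor between small categories is aspheric (w.r.t. a class 𝒜 of small
categories) if all its comma categories `A/b` belong to 𝒜. -/
def Aspheric (𝒜 : Set Cat.{0,0}) {A B : Cat.{0,0}} (u : A ⥤ B) : Prop :=
  ∀ b : B, Cat.of (CostructuredArrow u b) ∈ 𝒜

/-- The fiber of `u : A ⥤ B` over `b`: objects are the `a` with `u a = b`, morphisms
are the `f` with `u f = 1_b` (expressed via `eqToHom`). -/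
def Fiber {A B : Cat.{0,0}} (u : A ⥤ B) (b : B) : Type := {a : A // u.obj a = b}

instance {A B : Cat.{0,0}} (u : A ⥤ B) (b : B) : Category (Fiber u b) where
  Hom a a' := {f : a.1 ⟶ a'.1 // u.map f = eqToHom (a.2.trans a'.2.symm)}
  id a := ⟨𝟙 a.1, by simp⟩
  comp f g := ⟨f.1 ≫ g.1, by simp [f.2, g.2]⟩
  id_comp f := Subtype.ext (Category.id_comp f.1)
  comp_id f := Subtype.ext (Category.comp_id f.1)
  assoc f g h := Subtype.ext (Category.assoc f.1 g.1 h.1)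

/-- The canonical functor `A_b ⥤ A/b`, sending `a` to `(a, 1_b)`. -/
def fiberToComma {A B : Cat.{0,0}} (u : A ⥤ B) (b : B) :
    Fiber u b ⥤ CostructuredArrow u b where
  obj a := CostructuredArrow.mk (eqToHom a.2)
  map {a a'} f := CostructuredArrow.homMk f.1 (by simp [f.2])

/-- An arrow `c : a ⟶ a'` is cocartesian with respect to `u` if every `f : a ⟶ a''`
with `u f = u c` factors uniquely through `c` via a morphism over an identity. -/
def IsCocartesian {A B : Cat.{0,0}} (u : A ⥤ B) {a a' : A} (c : a ⟶ a') : Prop :=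
  ∀ (a'' : A) (f : a ⟶ a'') (h : u.obj a'' = u.obj a'),
    u.map f ≫ eqToHom h = u.map c →
    ∃! g : a' ⟶ a'', u.map g = eqToHom h.symm ∧ f = c ≫ g

/-- `u` is a precofibration if every arrow of `B` admits a cocartesian lift with any
prescribed source. -/
def IsPrecofibration {A B : Cat.{0,0}} (u : A ⥤ B) : Prop :=
  ∀ ⦃b b' : B⦄ (p : b ⟶ b') (a : A) (ha : u.obj a = b),
    ∃ (a' : A) (c : a ⟶ a') (ha' : u.obj a' = b'),
      u.map c = eqToHom ha ≫ p ≫ eqToHom ha'.symm ∧ IsCocartesian u c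

/-!
The fiber inclusion `A_b ⥤ A/b` is a right adjoint: the left adjoint sends `(a, p : u a ⟶ b)` to
the target of a cocartesian lift of `p` at `a`, and cocartesianness is exactly the universal
property of this lift. The comma categories of a left adjoint have terminal objects, so (As1)
and (As2) applied to the left adjoint `A/b ⥤ A_b` give that `A/b` is aspheric since `A_b` is.
-/

theorem IsRightAsphericityStructure.mem_of_isLeftAdjoint {𝒜 : Set Cat.{0,0}}
    (h𝒜 : IsRightAsphericityStructure 𝒜) {C D : Type} [SmallCategory C] [SmallCategory D]
    (F : C ⥤ D) [F.IsLeftAdjoint] (hD : Cat.of D ∈ 𝒜) : Cat.of C ∈ 𝒜 :=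
  h𝒜.2 (Cat.of C) (Cat.of D) F hD fun d =>
    h𝒜.1 _ (isLeftAdjoint_iff_hasTerminal_costructuredArrow.mp ‹_› d)

section Precofibration

variable {A B : Cat.{0,0}} {u : A ⥤ B} {b : B}

theorem IsCocartesian.existsUnique_fiberHom {a : A} {a' : Fiber u b} {c : a ⟶ a'.1}
    (hc : IsCocartesian u c) (Y : Fiber u b) (f : a ⟶ Y.1)
    (hf : u.map f ≫ eqToHom Y.2 = u.map c ≫ eqToHom a'.2) :
    ∃! g : a' ⟶ Y, f = c ≫ g.1 := by
  have hfc : u.map f ≫ eqToHom (Y.2.trans a'.2.symm) = u.map c := by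
    rw [← eqToHom_trans Y.2 a'.2.symm, ← Category.assoc, hf, Category.assoc, eqToHom_trans,
      eqToHom_refl, Category.comp_id]
  obtain ⟨g, ⟨hgu, hgf⟩, hg⟩ := hc Y.1 f _ hfc
  exact ⟨⟨g, hgu⟩, hgf, fun g' hg' => Subtype.ext (hg g'.1 ⟨g'.2, hg'⟩)⟩

theorem IsPrecofibration.hasInitial_structuredArrow_fiberToComma (h : IsPrecofibration u)
    (X : CostructuredArrow u b) : HasInitial (StructuredArrow X (fiberToComma u b)) := by
  obtain ⟨a', c, ha', hcu, hc⟩ := h X.hom X.left rfl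
  let a'' : Fiber u b := ⟨a', ha'⟩
  let L : StructuredArrow X (fiberToComma u b) :=
    StructuredArrow.mk (Y := a'')
      (CostructuredArrow.homMk (f := X) (f' := (fiberToComma u b).obj a'') c
        (by simp [fiberToComma, hcu]))
  have factor (Z : StructuredArrow X (fiberToComma u b)) :
      ∃! g : a'' ⟶ Z.right, Z.hom.left = c ≫ g.1 :=
    hc.existsUnique_fiberHom (a' := a'') Z.right Z.hom.left
      (by simpa [fiberToComma, hcu] using CostructuredArrow.w Z.hom)
  have (Z : StructuredArrow X (fiberToComma u b)) : Nonempty (L ⟶ Z) := by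
    obtain ⟨g, hg, -⟩ := factor Z
    exact ⟨StructuredArrow.homMk g (CostructuredArrow.hom_ext _ _ hg.symm)⟩
  have (Z : StructuredArrow X (fiberToComma u b)) : Subsingleton (L ⟶ Z) := by
    refine ⟨fun m m' => StructuredArrow.hom_ext _ _ ((factor Z).unique ?_ ?_)⟩
    · exact congrArg CommaMorphism.left (StructuredArrow.w m).symm
    · exact congrArg CommaMorphism.left (StructuredArrow.w m').symm
  exact hasInitial_of_unique L

theorem IsPrecofibration.isRightAdjoint_fiberToComma (h : IsPrecofibration u) (b : B) :
    (fiberToComma u b).IsRightAdjoint :=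
  isRightAdjoint_iff_hasInitial_structuredArrow.mpr h.hasInitial_structuredArrow_fiberToComma

end Precofibration

/-- A precofibration with aspheric fibers is an aspheric functor. -/
theorem aspheric_of_precofibration (𝒜 : Set Cat.{0,0})
    (h𝒜 : IsRightAsphericityStructure 𝒜) {A B : Cat.{0,0}} (u : A ⥤ B)
    (h : IsPrecofibration u) (hfib : ∀ b : B, Cat.of (Fiber u b) ∈ 𝒜) :
    Aspheric 𝒜 u := by
  intro b
  have := h.isRightAdjoint_fiberToComma b
  exact h𝒜.mem_of_isLeftAdjoint (fiberToComma u b).leftAdjoint (hfib b)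

end Paper
end

section
/- Let I be a small category, F, G : I ⥤ Cat two functors with small-category values, and α : F ⟶ G a natural transformation such that for every object i of I the component α_i : F i ⥤ G i is an aspheric functor. Then the induced functor ∫α : ∫F ⥤ ∫G between Grothendieck constructions (sending (i, a) to (i, α_i(a))) is aspheric. -/
/-!
Write `b = (j, y)` for an object of `∫G`. Transporting an object `((i, a), (k, g))` of
`∫F/b` along `k : i ⟶ j` gives an object `F(k)(a)` of `F(j)/y`; this is a functor
`∫F/b ⥤ F(j)/y`. It has a right adjoint, which views an object of `F(j)/y` as an object of
`∫F/b` lying over `𝟙 j`. Its comma categories therefore have terminal objects, so it is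
aspheric by (As1), and since `F(j)/y` is aspheric by hypothesis, (As2) shows that `∫F/b` is
aspheric.
-/

open CategoryTheory Limits

namespace Paper

namespace IsRightAsphericityStructure

variable {𝒜 : Set Cat.{0,0}} {A B : Cat.{0,0}}

lemma aspheric_of_isLeftAdjoint (h𝒜 : IsRightAsphericityStructure 𝒜) (u : A ⥤ B)
    (hu : u.IsLeftAdjoint) : Aspheric 𝒜 u := fun b =>
  h𝒜.1 _ (isLeftAdjoint_iff_hasTerminal_costructuredArrow.1 hu b)

lemma mem_of_aspheric (h𝒜 : IsRightAsphericityStructure 𝒜) (u : A ⥤ B)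
    (hu : Aspheric 𝒜 u) (hB : B ∈ 𝒜) : A ∈ 𝒜 :=
  h𝒜.2 A B u hB hu

end IsRightAsphericityStructure

universe v u v₁ u₁

section FunctorToCat

variable {C : Type u} [Category.{v} C] {D : C ⥤ Cat.{v₁, u₁}}

lemma map_id_obj {j : C} (x : D.obj j) : (D.map (𝟙 j)).toFunctor.obj x = x := by
  simp

lemma eqToHom_comp_map_id_map {j : C} {x x' y : D.obj j} (f : x' ⟶ y)
    (p : x = (D.map (𝟙 j)).toFunctor.obj x') (q : (D.map (𝟙 j)).toFunctor.obj y = y) :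
    (eqToHom p ≫ (D.map (𝟙 j)).toFunctor.map f) ≫ eqToHom q =
      eqToHom (p.trans (map_id_obj x')) ≫ f := by
  simp [Functor.congr_hom congr($(D.map_id j).toFunctor) f]

lemma map_obj_eq_of_comp_eq {j j' j'' : C} {s : j ⟶ j'} {k' : j' ⟶ j''} {k : j ⟶ j''}
    (h : s ≫ k' = k) (x : D.obj j) :
    (D.map k).toFunctor.obj x = (D.map k').toFunctor.obj ((D.map s).toFunctor.obj x) := by
  subst h
  simp

lemma map_map_eq_of_comp_eq {j j' j'' : C} {s : j ⟶ j'} {k' : j' ⟶ j''} {k : j ⟶ j''}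
    (h : s ≫ k' = k) {x y : D.obj j} (φ : x ⟶ y) :
    (D.map k').toFunctor.map ((D.map s).toFunctor.map φ) =
      eqToHom (map_obj_eq_of_comp_eq h x).symm ≫ (D.map k).toFunctor.map φ ≫
        eqToHom (map_obj_eq_of_comp_eq h y) := by
  subst h
  simp [Functor.congr_hom congr($(D.map_comp s k').toFunctor) φ]

end FunctorToCat

variable {C : Type u} [Category.{v} C] {F G : C ⥤ Cat.{v₁, u₁}} (α : F ⟶ G)

lemma app_obj_map_obj {j j' : C} (k : j ⟶ j') (x : F.obj j) :
    (α.app j').toFunctor.obj ((F.map k).toFunctor.obj x) =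
      (G.map k).toFunctor.obj ((α.app j).toFunctor.obj x) :=
  Functor.congr_obj congr($(α.naturality k).toFunctor) x

lemma map_map_comp_ι_map {j c : C} {x : F.obj j} {y : F.obj c} (k : j ⟶ c)
    (u : (F.map k).toFunctor.obj x ⟶ y) {z : G.obj c} (h : (α.app c).toFunctor.obj y ⟶ z) :
    (Grothendieck.map α).map (⟨k, u⟩ : (⟨j, x⟩ : Grothendieck F) ⟶ ⟨c, y⟩) ≫
        (Grothendieck.ι G c).map h =
      (⟨k, eqToHom (app_obj_map_obj α k x).symm ≫ (α.app c).toFunctor.map u ≫ h⟩ :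
        (⟨j, (α.app j).toFunctor.obj x⟩ : Grothendieck G) ⟶ ⟨c, z⟩) := by
  fapply Grothendieck.ext
  · exact Category.comp_id k
  · show eqToHom _ ≫ (eqToHom _ ≫ (G.map (𝟙 c)).toFunctor.map
        ((eqToHom (α.naturality k).symm).toNatTrans.app x ≫ (α.app c).toFunctor.map u) ≫
          eqToHom _ ≫ h) = eqToHom _ ≫ (α.app c).toFunctor.map u ≫ h
    simp only [Functor.map_comp, eqToHom_map, Cat.eqToHom_app, Category.assoc]
    rw [Functor.congr_hom congr($(G.map_id c).toFunctor) ((α.app c).toFunctor.map u)]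
    simp only [Cat.Hom.comp_toFunctor, Functor.comp_obj, Cat.Hom.id_toFunctor, Functor.id_obj,
      Functor.id_map, Category.assoc, eqToHom_trans_assoc, eqToHom_refl, Category.id_comp]
    exact (eqToHom_trans_assoc _ _ _).trans (eqToHom_trans_assoc _ _ _)

variable {α} {b : Grothendieck G}

-- `hw` is the fiber component of `(map α).map ⟨s, φ⟩ ≫ ⟨k', g'⟩ = ⟨k, g⟩`; the conclusion says
-- that `φ`, transported along `k'`, is a morphism over `b.fiber`.
lemma map_fiber_comp_eq_of_comp_eq {j j' : C} {x : F.obj j} {x' : F.obj j'} {s : j ⟶ j'}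
    (φ : (F.map s).toFunctor.obj x ⟶ x') {k : j ⟶ b.base} {k' : j' ⟶ b.base}
    (hk : s ≫ k' = k)
    {g : (G.map k).toFunctor.obj ((α.app j).toFunctor.obj x) ⟶ b.fiber}
    {g' : (G.map k').toFunctor.obj ((α.app j').toFunctor.obj x') ⟶ b.fiber}
    (hw : eqToHom (map_obj_eq_of_comp_eq rfl _) ≫ (G.map k').toFunctor.map
      (eqToHom (app_obj_map_obj α s x).symm ≫ (α.app j').toFunctor.map φ) ≫ g' =
        eqToHom (by rw [hk]) ≫ g) :
    (α.app b.base).toFunctor.map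
        (eqToHom (map_obj_eq_of_comp_eq hk x) ≫ (F.map k').toFunctor.map φ) ≫
      eqToHom (app_obj_map_obj α _ _) ≫ g' = eqToHom (app_obj_map_obj α _ _) ≫ g := by
  subst hk
  simp only [eqToHom_refl, Category.id_comp] at hw
  subst hw
  have nat := Functor.congr_hom congr($(α.naturality k').toFunctor) φ
  simp only [Cat.Hom.comp_map] at nat
  simp [eqToHom_map, nat]

-- `e.hom.base` retyped with source `e.left.base` instead of `((map α).obj e.left).base`: only
-- then does `F.map (homBase e)` apply to `e.left.fiber` up to reducible defeq, as `simp` needs.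
def homBase (e : CostructuredArrow (Grothendieck.map α) b) : e.left.base ⟶ b.base :=
  e.hom.base

def homFiber (e : CostructuredArrow (Grothendieck.map α) b) :
    (G.map (homBase e)).toFunctor.obj ((α.app e.left.base).toFunctor.obj e.left.fiber) ⟶
      b.fiber :=
  e.hom.fiber

lemma base_comp_homBase {e e' : CostructuredArrow (Grothendieck.map α) b} (ψ : e ⟶ e') :
    ψ.left.base ≫ homBase e' = homBase e :=
  congrArg Grothendieck.Hom.base (CostructuredArrow.w ψ)

variable (α b) in
def toFiber : CostructuredArrow (Grothendieck.map α) b ⥤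
    CostructuredArrow (α.app b.base).toFunctor b.fiber where
  obj e := CostructuredArrow.mk (Y := (F.map (homBase e)).toFunctor.obj e.left.fiber)
    (eqToHom (app_obj_map_obj α _ _) ≫ homFiber e)
  map {e e'} ψ := CostructuredArrow.homMk
    (eqToHom (map_obj_eq_of_comp_eq (base_comp_homBase ψ) _) ≫
      (F.map (homBase e')).toFunctor.map ψ.left.fiber)
    (by
      have w := Grothendieck.congr (CostructuredArrow.w ψ)
      simp only [Grothendieck.comp_fiber, Grothendieck.map_map_fiber] at w
      exact map_fiber_comp_eq_of_comp_eq _ (base_comp_homBase ψ) w)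
  map_id e := by
    ext
    simp only [CostructuredArrow.homMk_left, CostructuredArrow.id_left, Grothendieck.id_fiber]
    rw [eqToHom_map, eqToHom_trans, eqToHom_refl]
  map_comp ψ χ := by
    ext
    simp only [CostructuredArrow.homMk_left, CostructuredArrow.comp_left,
      Grothendieck.comp_fiber, Functor.map_comp, Category.assoc]
    rw [map_map_eq_of_comp_eq (base_comp_homBase χ), eqToHom_map]
    simp only [Category.assoc]
    rw [eqToHom_trans_assoc, eqToHom_trans_assoc]

@[simp]
lemma toFiber_obj_left (e : CostructuredArrow (Grothendieck.map α) b) :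
    ((toFiber α b).obj e).left = (F.map (homBase e)).toFunctor.obj e.left.fiber :=
  rfl

@[simp]
lemma toFiber_obj_hom (e : CostructuredArrow (Grothendieck.map α) b) :
    ((toFiber α b).obj e).hom = eqToHom (app_obj_map_obj α _ _) ≫ homFiber e :=
  rfl

variable (α b) in
def ofFiber (d : CostructuredArrow (α.app b.base).toFunctor b.fiber) :
    CostructuredArrow (Grothendieck.map α) b :=
  CostructuredArrow.mk (Y := (Grothendieck.ι F b.base).obj d.left)
    ((Grothendieck.ι G b.base).map d.hom)

@[simp]
lemma ofFiber_left (d : CostructuredArrow (α.app b.base).toFunctor b.fiber) :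
    (ofFiber α b d).left = ⟨b.base, d.left⟩ :=
  rfl

@[simp]
lemma homBase_ofFiber (d : CostructuredArrow (α.app b.base).toFunctor b.fiber) :
    homBase (ofFiber α b d) = 𝟙 b.base :=
  rfl

section TerminalObject

variable {d : CostructuredArrow (α.app b.base).toFunctor b.fiber}

variable (d) in
def toFiberTerminal : CostructuredArrow (toFiber α b) d :=
  CostructuredArrow.mk (Y := ofFiber α b d)
    (CostructuredArrow.homMk (eqToHom (map_id_obj d.left)) (by
      simp only [toFiber_obj_left, ofFiber_left, homBase_ofFiber, toFiber_obj_hom]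
      rw [eqToHom_map]
      exact (eqToHom_trans_assoc _ _ _).symm))

lemma map_comp_ofFiber_hom (e : CostructuredArrow (toFiber α b) d) :
    (Grothendieck.map α).map
        (⟨homBase e.left, e.hom.left⟩ : e.left.left ⟶ (ofFiber α b d).left) ≫
      (ofFiber α b d).hom = e.left.hom := by
  refine (map_map_comp_ι_map α _ _ d.hom).trans ?_
  have w := CostructuredArrow.w e.hom
  simp only [toFiber_obj_left, toFiber_obj_hom] at w
  fapply Grothendieck.ext
  · rfl
  · dsimp only
    rw [w]
    exact (eqToHom_trans_assoc _ _ _).trans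
      ((eqToHom_trans_assoc _ _ _).trans (Category.id_comp _))

def liftToFiberTerminal (e : CostructuredArrow (toFiber α b) d) : e ⟶ toFiberTerminal d :=
  CostructuredArrow.homMk (CostructuredArrow.homMk _ (map_comp_ofFiber_hom e)) (by
    ext
    exact (eqToHom_comp_map_id_map _ _ (map_id_obj d.left)).trans (Category.id_comp _))

lemma eq_liftToFiberTerminal {e : CostructuredArrow (toFiber α b) d}
    (m : e ⟶ toFiberTerminal d) : m = liftToFiberTerminal e := by
  have w := congrArg CommaMorphism.left (CostructuredArrow.w m)
  ext
  fapply Grothendieck.ext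
  · exact (Category.comp_id _).symm.trans (base_comp_homBase m.left)
  · exact (eqToHom_comp_map_id_map _ _ (map_id_obj d.left)).symm.trans w

variable (d) in
def isTerminalToFiberTerminal : IsTerminal (toFiberTerminal d) :=
  IsTerminal.ofUniqueHom liftToFiberTerminal fun _ => eq_liftToFiberTerminal

end TerminalObject

lemma isLeftAdjoint_toFiber : (toFiber α b).IsLeftAdjoint :=
  isLeftAdjoint_iff_hasTerminal_costructuredArrow.2 fun d =>
    (isTerminalToFiberTerminal d).hasTerminal

/-- If a natural transformation `α : F ⟶ G` between functors `I ⥤ Cat` is componentwise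
aspheric, then the induced functor `∫F ⥤ ∫G` between the Grothendieck constructions is
aspheric. -/
theorem grothendieck_map_aspheric (𝒜 : Set Cat.{0,0})
    (h𝒜 : IsRightAsphericityStructure 𝒜) {I : Cat.{0,0}} (F G : ↥I ⥤ Cat.{0,0})
    (α : F ⟶ G) (hα : ∀ i : I, Aspheric 𝒜 (α.app i).toFunctor) :
    Aspheric 𝒜 (A := Cat.of (Grothendieck F)) (B := Cat.of (Grothendieck G))
      (Grothendieck.map α) := fun b =>
  h𝒜.mem_of_aspheric (B := Cat.of (CostructuredArrow (α.app b.base).toFunctor b.fiber))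
    (toFiber α b) (h𝒜.aspheric_of_isLeftAdjoint _ isLeftAdjoint_toFiber) (hα b.base b.fiber)

end Paper
end
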